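/- arXiv:2308.06990 — 2 statements merged into one kernel-verified Lean document; each statement's English description precedes it below -/
import Mathlib

section
/- Let p be a prime, e ≥ 1 an integer, and suppose R, S ∈ ℤ[X] are polynomials such that p² does not divide R(0) and the reductions modulo p satisfy R̄ ≠ 0 in 𝔽_p[X] and R̄ = X^e · S̄. Then R is divisible by an irreducible polynomial in ℤ[X] of degree at least e. -/
open Polynomial Filter
open scoped Classical

/-- The logarithmic Mahler measure `m(P) = ∫₀¹ log|P(e^{2πit})| dt` of an integer polynomial. -/
noncomputable def mahlerMeasure (P : ℤ[X]) : ℝ :=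
  ∫ t in (0:ℝ)..1,
    Real.log ‖Polynomial.aeval
      (Complex.exp (2 * (Real.pi : ℂ) * (t : ℂ) * Complex.I)) P‖

/-- `P` is the ℤ-minimal polynomial of `α`: the irreducible polynomial in `ℤ[X]`
with positive leading coefficient vanishing at `α`. -/
def IsZMinpoly {K : Type*} [CommRing K] (α : K) (P : ℤ[X]) : Prop :=
  Irreducible P ∧ 0 < P.leadingCoeff ∧ Polynomial.aeval α P = 0

/-- The absolute logarithmic Weil height `h(α) = m(P)/deg P`. -/
noncomputable def logHeight {K : Type*} [CommRing K] (α : K) : ℝ :=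
  if h : ∃ P : ℤ[X], IsZMinpoly α P then
    mahlerMeasure h.choose / (h.choose.natDegree : ℝ)
  else 0

/-- The degree `[ℚ(α):ℚ]` of an algebraic number, read off from its ℤ-minimal polynomial. -/
noncomputable def degQ {K : Type*} [CommRing K] (α : K) : ℕ :=
  if h : ∃ P : ℤ[X], IsZMinpoly α P then h.choose.natDegree else 0

/-- The modified height `h'(α) = h(α) + log(2d)/d` where `d = [ℚ(α):ℚ]`. -/
noncomputable def modHeight {K : Type*} [CommRing K] (α : K) : ℝ :=
  logHeight α + Real.log (2 * (degQ α : ℝ)) / (degQ α : ℝ)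

/-- `|P|₁`: the sum of the absolute values of the coefficients. -/
noncomputable def l1norm (P : ℤ[X]) : ℝ := ∑ i ∈ P.support, |(P.coeff i : ℝ)|

/-- `(1/[ℚ(α):ℚ]) Σ_{σ : ℚ(α) → ℂ} log|σ(α) - κ|`, written as the average over the
conjugates of `α` in `ℂ` (the roots of its ℤ-minimal polynomial). -/
noncomputable def conjAvg (κ α : ℂ) : ℝ :=
  if h : ∃ P : ℤ[X], IsZMinpoly α P then
    (((h.choose.map (Int.castRingHom ℂ)).roots.map
        fun z => Real.log ‖z - κ‖).sum) / (h.choose.natDegree : ℝ)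
  else 0

/-- **Lemma (Statement 8, generalized Eisenstein criterion).** Let `p` be a prime, `e ≥ 1` an
integer, and `R, S ∈ ℤ[X]` with `p² ∤ R(0)`, `R̄ ≠ 0` and `R̄ = X^e · S̄` in `𝔽_p[X]`. Then `R`
is divisible by an irreducible polynomial in `ℤ[X]` of degree at least `e`. -/
theorem statement8 (p : ℕ) (hp : p.Prime) (e : ℕ) (he : 1 ≤ e) (R S : ℤ[X])
    (h0 : ¬ ((p : ℤ) ^ 2 ∣ R.eval 0))
    (hR : R.map (Int.castRingHom (ZMod p)) ≠ 0)
    (hRS : R.map (Int.castRingHom (ZMod p)) = X ^ e * S.map (Int.castRingHom (ZMod p))) :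
    ∃ T : ℤ[X], Irreducible T ∧ T ∣ R ∧ e ≤ T.natDegree := by
  haveI : Fact p.Prime := ⟨hp⟩
  have hpZ : Prime (p : ℤ) := Nat.prime_iff_prime_int.mp hp
  set f := Int.castRingHom (ZMod p) with hf
  have hR0 : R ≠ 0 := by intro h; apply hR; simp [h]
  -- p ∣ R(0)
  have hpR0 : (p : ℤ) ∣ R.eval 0 := by
    have h1 : (R.map f).eval 0 = 0 := by
      rw [hRS]; simp [zero_pow (by omega : e ≠ 0)]
    rw [Polynomial.eval_map, Polynomial.eval₂_at_zero] at h1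
    rw [← Polynomial.coeff_zero_eq_eval_zero]
    exact (ZMod.intCast_zmod_eq_zero_iff_dvd _ p).mp h1
  -- find irreducible factor T with p ∣ T(0)
  obtain ⟨u, hu⟩ := (UniqueFactorizationMonoid.factors_prod hR0)
  have hdvd : (p : ℤ) ∣ ((UniqueFactorizationMonoid.factors R).map (fun q => q.eval 0)).prod := by
    have heq : R.eval 0 = ((UniqueFactorizationMonoid.factors R).map (fun q => q.eval 0)).prod * (u : ℤ[X]).eval 0 := by
      rw [← Polynomial.eval_multiset_prod, ← Polynomial.eval_mul, hu]
    have hu' : IsUnit ((u : ℤ[X]).eval 0) := by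
      obtain ⟨v, hv⟩ := Polynomial.isUnit_iff.mp u.isUnit
      rw [← hv.2]; simpa using hv.1
    rw [heq] at hpR0
    exact (hu'.dvd_mul_right).mp hpR0
  obtain ⟨a, ha, hpa⟩ := hpZ.exists_mem_multiset_dvd hdvd
  obtain ⟨T, hT, rfl⟩ := Multiset.mem_map.mp ha
  have hTirr : Irreducible T := UniqueFactorizationMonoid.irreducible_of_factor T hT
  have hTR : T ∣ R := UniqueFactorizationMonoid.dvd_of_mem_factors hT
  obtain ⟨Q, hQ⟩ := hTR
  have hTR : T ∣ R := ⟨Q, hQ⟩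
  -- p ∤ Q(0)
  have hpQ : ¬ (p : ℤ) ∣ Q.eval 0 := by
    intro h
    apply h0
    rw [hQ, Polynomial.eval_mul, sq]
    exact mul_dvd_mul hpa h
  -- reductions
  have hmap : R.map f = T.map f * Q.map f := by rw [hQ, Polynomial.map_mul]
  have hXQ : ¬ (X : (ZMod p)[X]) ∣ Q.map f := by
    intro h
    apply hpQ
    have := Polynomial.X_dvd_iff.mp h
    rw [Polynomial.coeff_map] at this
    rw [← Polynomial.coeff_zero_eq_eval_zero]
    exact (ZMod.intCast_zmod_eq_zero_iff_dvd _ p).mp this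
  have hXe : (X : (ZMod p)[X]) ^ e ∣ T.map f := by
    have h1 : (X : (ZMod p)[X]) ^ e ∣ T.map f * Q.map f := by
      rw [← hmap, hRS]; exact Dvd.intro _ rfl
    exact (Polynomial.prime_X).pow_dvd_of_dvd_mul_right e hXQ h1
  have hTm0 : T.map f ≠ 0 := by
    intro h
    apply hR
    rw [hmap, h, zero_mul]
  refine ⟨T, hTirr, hTR, ?_⟩
  calc e = ((X : (ZMod p)[X]) ^ e).natDegree := by simp
    _ ≤ (T.map f).natDegree := Polynomial.natDegree_le_of_dvd hXe hTm0
    _ ≤ T.natDegree := Polynomial.natDegree_map_le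
end

section
/- Let p be a prime and let x be an algebraic number in an algebraic closure of ℚ_p with |x|_p ≤ 1. Then for every algebraic number α with h(α) ≤ 1 such that no conjugate of α equals x, one has (1/[ℚ(α):ℚ]) Σ_{σ:ℚ(α)→Q̄_p} log|σ(α) − x|_p ≤ h(α). -/
open Polynomial Filter
open scoped Classical

instance (p : ℕ) [Fact p.Prime] : CharZero (AlgebraicClosure ℚ_[p]) :=
  charZero_of_injective_algebraMap (algebraMap ℚ_[p] (AlgebraicClosure ℚ_[p])).injective

/-- `v` is the unique extension to the algebraic closure of `ℚ_p` of the `p`-adic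
absolute value, normalized by `|p|_p = 1/p`. -/
def IsPadicAbs (p : ℕ) [Fact p.Prime] (v : AlgebraicClosure ℚ_[p] → ℝ) : Prop :=
  (∀ x, 0 ≤ v x) ∧ (∀ x, v x = 0 ↔ x = 0) ∧
  (∀ x y, v (x * y) = v x * v y) ∧
  (∀ x y, v (x + y) ≤ max (v x) (v y)) ∧
  (∀ x : ℚ_[p], v (algebraMap ℚ_[p] (AlgebraicClosure ℚ_[p]) x) = ‖x‖)

/-- `(1/[ℚ(α):ℚ]) Σ_{σ : ℚ(α) → Q̄_p} log|σ(α) - κ|_p`, written as the average over the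
conjugates of `α` in `Q̄_p` (the roots of its ℤ-minimal polynomial). -/
noncomputable def conjAvgV (p : ℕ) [Fact p.Prime] (v : AlgebraicClosure ℚ_[p] → ℝ)
    (κ α : AlgebraicClosure ℚ_[p]) : ℝ :=
  if h : ∃ P : ℤ[X], IsZMinpoly α P then
    (((h.choose.map (Int.castRingHom (AlgebraicClosure ℚ_[p]))).roots.map
        fun z => Real.log (v (z - κ))).sum) / (h.choose.natDegree : ℝ)
  else 0

section Padic
variable {p : ℕ} [Fact p.Prime] {v : AlgebraicClosure ℚ_[p] → ℝ}

namespace IsPadicAbs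

variable (hv : IsPadicAbs p v)
include hv

lemma vone : v 1 = 1 := by
  have h := hv.2.2.1 1 1
  rw [mul_one] at h
  have h1 : v 1 ≠ 0 := fun h0 => one_ne_zero ((hv.2.1 1).mp h0)
  exact (mul_right_cancel₀ h1 (by rw [← h, one_mul])).symm

/-- v as monoid hom -/
noncomputable def toHom : AlgebraicClosure ℚ_[p] →* ℝ :=
  { toFun := v, map_one' := hv.vone, map_mul' := hv.2.2.1 }

lemma vneg (y : AlgebraicClosure ℚ_[p]) : v (-y) = v y := by
  have hm1 : v (-1) = 1 := by
    have h := hv.2.2.1 (-1) (-1)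
    rw [neg_mul_neg, one_mul, hv.vone] at h
    have h0 : 0 ≤ v (-1) := hv.1 _
    nlinarith [h, h0]
  calc v (-y) = v ((-1) * y) := by rw [neg_one_mul]
  _ = v (-1) * v y := hv.2.2.1 _ _
  _ = v y := by rw [hm1, one_mul]

lemma vint (m : ℤ) : v ((m : AlgebraicClosure ℚ_[p])) = ‖(m : ℚ_[p])‖ := by
  rw [← hv.2.2.2.2 (m : ℚ_[p]), map_intCast]

lemma vint_le_one (m : ℤ) : v ((m : AlgebraicClosure ℚ_[p])) ≤ 1 := by
  rw [hv.vint]; exact Padic.norm_int_le_one m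

lemma vpow_le_one {x : AlgebraicClosure ℚ_[p]} (hx : v x ≤ 1) (i : ℕ) : v (x ^ i) ≤ 1 := by
  induction i with
  | zero => simp [pow_zero, hv.vone]
  | succ n ih =>
      rw [pow_succ, hv.2.2.1]
      calc v (x ^ n) * v x ≤ 1 * 1 := mul_le_mul ih hx (hv.1 _) zero_le_one
      _ = 1 := by norm_num

lemma vsum_le_one {s : Finset ℕ} {f : ℕ → AlgebraicClosure ℚ_[p]} (h : ∀ i ∈ s, v (f i) ≤ 1) :
    v (∑ i ∈ s, f i) ≤ 1 := by
  classical
  induction s using Finset.cons_induction with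
  | empty =>
      simp only [Finset.sum_empty]
      have : v 0 = 0 := (hv.2.1 0).mpr rfl
      rw [this]; norm_num
  | cons a s ha ih =>
      rw [Finset.sum_cons]
      refine le_trans (hv.2.2.2.1 _ _) (max_le (h a (Finset.mem_cons_self a s)) ?_)
      exact ih fun i hi => h i (Finset.mem_cons_of_mem hi)

lemma v_aeval_le_one {x : AlgebraicClosure ℚ_[p]} (hx : v x ≤ 1) (P : ℤ[X]) :
    v (Polynomial.aeval x P) ≤ 1 := by
  rw [Polynomial.aeval_eq_sum_range]
  refine hv.vsum_le_one fun i _ => ?_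
  rw [zsmul_eq_mul, hv.2.2.1]
  calc v ((P.coeff i : AlgebraicClosure ℚ_[p])) * v (x ^ i) ≤ 1 * 1 :=
        mul_le_mul (hv.vint_le_one _) (hv.vpow_le_one hx i) (hv.1 _) zero_le_one
  _ = 1 := by norm_num

/-- lower bound for v on positive integers -/
lemma one_div_le_vint {m : ℤ} (hm : 0 < m) : 1 / (m : ℝ) ≤ v ((m : AlgebraicClosure ℚ_[p])) := by
  rw [hv.vint]
  obtain ⟨n, rfl⟩ : ∃ n : ℕ, m = (n : ℤ) := ⟨m.toNat, by omega⟩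
  have hn0 : n ≠ 0 := by exact_mod_cast hm.ne'
  set k := n.factorization p with hk
  set u := n / p ^ k with hudef
  have hfact : p ^ k * u = n := Nat.ordProj_mul_ordCompl_eq_self n p
  have hu : ¬ p ∣ u := Nat.not_dvd_ordCompl (Fact.out) hn0
  have hnormu : ‖((u : ℤ) : ℚ_[p])‖ = 1 := by
    have hle : ‖((u : ℤ) : ℚ_[p])‖ ≤ 1 := Padic.norm_int_le_one _
    have hlt : ¬ ‖((u : ℤ) : ℚ_[p])‖ < 1 := by
      intro hlt
      have := (Padic.norm_intCast_lt_one_iff (k := (u : ℤ))).mp hlt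
      exact hu (by exact_mod_cast this)
    linarith [lt_or_eq_of_le hle |>.resolve_left hlt]
  have hsplit : (((n : ℤ)) : ℚ_[p]) = (p : ℚ_[p]) ^ k * ((u : ℤ) : ℚ_[p]) := by
    have : (n : ℤ) = (p : ℤ) ^ k * (u : ℤ) := by exact_mod_cast hfact.symm
    rw [this]; push_cast; ring
  rw [hsplit, norm_mul, norm_pow, Padic.norm_p, hnormu, mul_one]
  have hple : (p : ℝ) ^ k ≤ ((n : ℤ) : ℝ) := by
    have h1 : p ^ k ≤ n := Nat.ordProj_le p hn0
    exact_mod_cast h1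
  have hp0 : (0:ℝ) < (p:ℝ) ^ k := by
    have : 0 < p := (Fact.out : p.Prime).pos
    positivity
  rw [inv_pow, ← one_div]
  apply one_div_le_one_div_of_le hp0 hple

end IsPadicAbs

/-- multiset log-prod lemma -/
lemma log_multiset_prod {γ : Type*} (s : Multiset γ) (g : γ → ℝ)
    (h : ∀ y ∈ s, g y ≠ 0) :
    Real.log (s.map g).prod = ((s.map fun y => Real.log (g y))).sum := by
  induction s using Multiset.induction_on with
  | empty => simp
  | cons a s ih =>
      simp only [Multiset.map_cons, Multiset.prod_cons, Multiset.sum_cons]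
      rw [Real.log_mul (h a (Multiset.mem_cons_self a s)) ?_,
        ih fun y hy => h y (Multiset.mem_cons_of_mem hy)]
      exact Multiset.prod_ne_zero fun h0 => by
        obtain ⟨y, hy, hgy⟩ := Multiset.mem_map.mp h0
        exact h y (Multiset.mem_cons_of_mem hy) hgy

/-- The p-adic half. -/
lemma padic_side {p : ℕ} [Fact p.Prime] {v : AlgebraicClosure ℚ_[p] → ℝ}
    (hv : IsPadicAbs p v) {x : AlgebraicClosure ℚ_[p]} (hx : v x ≤ 1)
    {P : ℤ[X]} (hlead : 0 < P.leadingCoeff) (hne : Polynomial.aeval x P ≠ 0) :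
    ((P.map (Int.castRingHom (AlgebraicClosure ℚ_[p]))).roots.map
      fun z => Real.log (v (z - x))).sum ≤ Real.log (P.leadingCoeff : ℝ) := by
  classical
  set Pm := P.map (Int.castRingHom (AlgebraicClosure ℚ_[p])) with hPm
  have hP0 : P ≠ 0 := fun h => by simp [h] at hlead
  have hPm0 : Pm ≠ 0 := by
    rw [hPm, Ne, Polynomial.map_eq_zero_iff (Int.cast_injective)]
    exact hP0
  have hsplits : Pm.Splits := IsAlgClosed.splits Pm
  have hprod := hsplits.eq_prod_roots
  have heval : Polynomial.aeval x P = Pm.eval x := by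
    rw [hPm, Polynomial.eval_map, Polynomial.aeval_def]
    rfl
  have hevalprod : Pm.eval x = Pm.leadingCoeff * ((Pm.roots.map fun z => x - z).prod) := by
    conv_lhs => rw [hprod]
    rw [Polynomial.eval_mul, Polynomial.eval_C, Polynomial.eval_multiset_prod]
    simp only [Multiset.map_map, Function.comp]
    simp [Polynomial.eval_sub]
  have hlc : Pm.leadingCoeff = ((P.leadingCoeff : ℤ) : AlgebraicClosure ℚ_[p]) := by
    rw [hPm, Polynomial.leadingCoeff_map_of_leadingCoeff_ne_zero]
    · rfl
    · simp only [eq_intCast, Int.cast_ne_zero, ne_eq]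
      exact Polynomial.leadingCoeff_ne_zero.mpr hP0
  have hroot_ne : ∀ z ∈ Pm.roots, x - z ≠ 0 := by
    intro z hz h0
    apply hne
    rw [heval, hevalprod]
    have : (0 : AlgebraicClosure ℚ_[p]) ∈ Pm.roots.map fun z => x - z := by
      rw [Multiset.mem_map]; exact ⟨z, hz, h0⟩
    rw [Multiset.prod_eq_zero this, mul_zero]
  have hvmul : v (Pm.eval x) = v (Pm.leadingCoeff) * ((Pm.roots.map fun z => v (x - z)).prod) := by
    rw [hevalprod, hv.2.2.1]
    congr 1
    have := map_multiset_prod hv.toHom (Pm.roots.map fun z => x - z)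
    simp only [Multiset.map_map, Function.comp] at this ⊢
    exact this
  have hlog : Real.log (v (Pm.eval x)) =
      Real.log (v Pm.leadingCoeff) + ((Pm.roots.map fun z => Real.log (v (x - z))).sum) := by
    rw [hvmul, Real.log_mul, log_multiset_prod]
    · intro z hz
      exact fun h0 => hroot_ne z hz ((hv.2.1 _).mp h0)
    · intro h0
      have : Pm.leadingCoeff = 0 := (hv.2.1 _).mp h0
      exact hPm0 (Polynomial.leadingCoeff_eq_zero.mp this)
    · intro h0
      rw [Multiset.prod_eq_zero_iff] at h0
      obtain ⟨z, hz, hgz⟩ := Multiset.mem_map.mp h0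
      exact hroot_ne z hz ((hv.2.1 _).mp hgz)
  have hswap : (Pm.roots.map fun z => Real.log (v (z - x))).sum
      = (Pm.roots.map fun z => Real.log (v (x - z))).sum := by
    congr 1
    apply Multiset.map_congr rfl
    intro z _
    rw [show z - x = -(x - z) by ring, hv.vneg]
  rw [hswap]
  have h1 : Real.log (v (Pm.eval x)) ≤ 0 := by
    apply Real.log_nonpos (hv.1 _)
    rw [← heval]; exact hv.v_aeval_le_one hx P
  have h2 : -Real.log (P.leadingCoeff : ℝ) ≤ Real.log (v Pm.leadingCoeff) := by
    rw [hlc]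
    have := hv.one_div_le_vint hlead
    calc -Real.log (P.leadingCoeff : ℝ) = Real.log (1 / (P.leadingCoeff : ℝ)) := by
          rw [Real.log_div one_ne_zero (by exact_mod_cast hlead.ne'), Real.log_one, zero_sub]
    _ ≤ Real.log (v ((P.leadingCoeff : ℤ) : AlgebraicClosure ℚ_[p])) := by
          apply Real.log_le_log (by positivity) this
  linarith [hlog]

end Padic


section Arch

open MeasureTheory intervalIntegral Set
open scoped Real

/-- log is integrable on (0,1]. -/
lemma integrableOn_log_Ioc : IntegrableOn Real.log (Set.Ioc 0 1) volume := by
  have hcont : ∀ n : ℕ, IntegrableOn Real.log (Set.Ioc (((n:ℝ)+2)⁻¹) 1) volume := by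
    intro n
    have h1 : ContinuousOn Real.log (Set.Icc (((n:ℝ)+2)⁻¹) 1) := by
      apply Real.continuousOn_log.mono
      intro x hx
      simp only [Set.mem_Icc] at hx
      have h2 : (0:ℝ) < ((n:ℝ)+2)⁻¹ := by positivity
      simp only [Set.mem_compl_iff, Set.mem_singleton_iff]
      intro h; rw [h] at hx; linarith [hx.1]
    exact (h1.integrableOn_compact isCompact_Icc).mono_set Set.Ioc_subset_Icc_self
  apply MeasureTheory.integrableOn_Ioc_of_intervalIntegral_norm_bounded_left
    (f := Real.log) (I := 1) (a := fun n : ℕ => ((n:ℝ)+2)⁻¹) (b := 1) (l := atTop) hcont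
  · exact tendsto_inv_atTop_zero.comp
      (tendsto_atTop_add_const_right atTop 2 tendsto_natCast_atTop_atTop)
  · filter_upwards with n
    set e : ℝ := ((n:ℝ)+2)⁻¹ with he
    have hpos : (0:ℝ) < e := by positivity
    have hle1 : e ≤ 1 := by
      rw [he, inv_le_one_iff₀]; right; linarith
    have heq : ∫ x in Set.Ioc e 1, ‖Real.log x‖ = ∫ x in Set.Ioc e 1, -Real.log x := by
      apply MeasureTheory.setIntegral_congr_fun measurableSet_Ioc
      intro x hx
      simp only [Set.mem_Ioc] at hx
      simp only [Real.norm_eq_abs]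
      rw [abs_of_nonpos (Real.log_nonpos (lt_trans hpos hx.1).le hx.2)]
    rw [heq]
    have h2 : ∫ x in Set.Ioc e 1, -Real.log x = ∫ x in e..1, -Real.log x := by
      rw [intervalIntegral.integral_of_le hle1]
    rw [h2, intervalIntegral.integral_neg, integral_log]
    have hlog : Real.log e ≤ 0 := Real.log_nonpos hpos.le hle1
    have : e * Real.log e ≤ 0 := mul_nonpos_of_nonneg_of_nonpos hpos.le hlog
    simp only [Real.log_one]
    nlinarith

/-- fun x => log |x| is interval integrable on any interval. -/
lemma intervalIntegrable_log_abs (a b : ℝ) :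
    IntervalIntegrable (fun x => Real.log |x|) volume a b := by
  -- first on 0..M for M ≥ 0
  have key : ∀ M : ℝ, 0 ≤ M → IntervalIntegrable (fun x => Real.log |x|) volume 0 M := by
    intro M hM
    rw [intervalIntegrable_iff_integrableOn_Ioc_of_le hM]
    rcases le_or_gt M 1 with h | h
    · apply (integrableOn_log_Ioc.mono_set (Set.Ioc_subset_Ioc le_rfl h)).congr_fun ?_ measurableSet_Ioc
      intro x hx
      simp [abs_of_pos hx.1]
    · have h1 : IntegrableOn Real.log (Set.Ioc 0 M) volume := by
        have : Set.Ioc (0:ℝ) M = Set.Ioc 0 1 ∪ Set.Ioc 1 M := by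
          rw [Set.Ioc_union_Ioc_eq_Ioc zero_le_one h.le]
        rw [this]
        apply MeasureTheory.IntegrableOn.union integrableOn_log_Ioc
        have hc : ContinuousOn Real.log (Set.Icc (1:ℝ) M) := by
          apply Real.continuousOn_log.mono
          intro x hx
          simp only [Set.mem_compl_iff, Set.mem_singleton_iff]
          intro h0; rw [h0] at hx; exact absurd hx.1 (by norm_num)
        exact (hc.integrableOn_compact isCompact_Icc).mono_set Set.Ioc_subset_Icc_self
      apply h1.congr_fun ?_ measurableSet_Ioc
      intro x hx
      simp [abs_of_pos hx.1]
  -- then on -M..0 by reflection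
  have key2 : ∀ M : ℝ, 0 ≤ M → IntervalIntegrable (fun x => Real.log |x|) volume (-M) 0 := by
    intro M hM
    have := (IntervalIntegrable.iff_comp_neg (f := fun x => Real.log |x|) (a := 0) (b := M)).mp (key M hM)
    simp only [abs_neg, neg_zero] at this
    exact this.symm
  -- now general
  set M := max |a| |b| with hMdef
  have hM : 0 ≤ M := le_trans (abs_nonneg a) (le_max_left _ _)
  have hfull : IntervalIntegrable (fun x => Real.log |x|) volume (-M) M :=
    (key2 M hM).trans (key M hM)
  apply hfull.mono_set
  rw [Set.uIcc_subset_uIcc_iff_mem]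
  constructor
  · rw [Set.mem_uIcc]; left
    constructor
    · linarith [neg_abs_le a, le_max_left |a| |b|]
    · linarith [le_abs_self a, le_max_left |a| |b|]
  · rw [Set.mem_uIcc]; left
    constructor
    · linarith [neg_abs_le b, le_max_right |a| |b|]
    · linarith [le_abs_self b, le_max_right |a| |b|]

/-- |log |x - s|| integrable on [0,1] for any s -/
lemma intervalIntegrable_abs_log_abs_sub (s : ℝ) :
    IntervalIntegrable (fun t => |Real.log (|t - s|)|) volume 0 1 := by
  have h := (intervalIntegrable_log_abs (0 - s) (1 - s)).comp_sub_right s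
  simp only [sub_add_cancel, zero_sub] at h
  have h2 : IntervalIntegrable (fun t => Real.log |t - s|) volume 0 1 := by
    convert h using 2 <;> ring_nf
  simpa using h2.abs
/-- chord length -/
lemma abs_exp_mul_I_sub_one (x : ℝ) :
    ‖Complex.exp ((x:ℂ) * Complex.I) - 1‖ = 2 * |Real.sin (x / 2)| := by
  rw [Complex.exp_mul_I]
  have h1 : Complex.cos x + Complex.sin x * Complex.I - 1
      = ((Real.cos x - 1 : ℝ) : ℂ) + ((Real.sin x : ℝ) : ℂ) * Complex.I := by
    push_cast [Complex.ofReal_cos, Complex.ofReal_sin]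
    ring
  rw [h1]
  rw [Complex.norm_def, Complex.normSq_add_mul_I]
  have hs : Real.sin (x/2)^2 = 1/2 - Real.cos x / 2 := by
    have := Real.sin_sq_eq_half_sub (x/2)
    rwa [show 2*(x/2) = x by ring] at this
  have h2 : (Real.cos x - 1) ^ 2 + Real.sin x ^ 2 = (2 * |Real.sin (x / 2)|) ^ 2 := by
    have hpy := Real.sin_sq_add_cos_sq x
    have habs : |Real.sin (x/2)| ^ 2 = Real.sin (x/2) ^ 2 := sq_abs _
    nlinarith
  rw [h2, Real.sqrt_sq (by positivity)]

/-- sine lower bound on [-1/2, 3/2] -/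
lemma sin_lower_bound {u : ℝ} (h1 : -(1/2 : ℝ) ≤ u) (h2 : u ≤ 3/2) :
    |u| * |u - 1| ≤ |Real.sin (π * u)| := by
  have hbase : ∀ w : ℝ, 0 ≤ w → w ≤ 1/2 → 2 * w ≤ Real.sin (π * w) := by
    intro w hw0 hw1
    have hj := Real.mul_le_sin (x := π * w) (by positivity) (by nlinarith [Real.pi_pos])
    have hπ : (0:ℝ) < π := Real.pi_pos
    calc 2 * w = 2 / π * (π * w) := by field_simp
    _ ≤ Real.sin (π * w) := hj
  rcases le_or_gt u 0 with hu0 | hu0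
  · have h3 : 2 * (-u) ≤ Real.sin (π * (-u)) := hbase (-u) (by linarith) (by linarith)
    have h4 : Real.sin (π * (-u)) = -Real.sin (π * u) := by
      rw [mul_neg, Real.sin_neg]
    rw [h4] at h3
    have h5 : -Real.sin (π * u) ≤ |Real.sin (π * u)| := neg_le_abs _
    have h6 : |u| = -u := abs_of_nonpos hu0
    have h7 : |u - 1| = 1 - u := by rw [abs_of_nonpos (by linarith)]; ring
    rw [h6, h7]
    nlinarith
  rcases le_or_gt u (1/2) with hu1 | hu1
  · have h3 := hbase u hu0.le hu1
    have h6 : |u| = u := abs_of_pos hu0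
    have h7 : |u - 1| = 1 - u := by rw [abs_of_nonpos (by linarith)]; ring
    rw [h6, h7]
    refine le_trans ?_ (le_abs_self _)
    nlinarith
  rcases le_or_gt u 1 with hu2 | hu2
  · have h3 : 2 * (1 - u) ≤ Real.sin (π * (1 - u)) := hbase (1-u) (by linarith) (by linarith)
    have h4 : Real.sin (π * (1 - u)) = Real.sin (π * u) := by
      rw [show π * (1 - u) = π - π * u by ring, Real.sin_pi_sub]
    rw [h4] at h3
    have h6 : |u| = u := abs_of_pos hu0
    have h7 : |u - 1| = 1 - u := by rw [abs_of_nonpos (by linarith)]; ring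
    rw [h6, h7]
    refine le_trans ?_ (le_abs_self _)
    nlinarith
  · have h3 : 2 * (u - 1) ≤ Real.sin (π * (u - 1)) := hbase (u-1) (by linarith) (by linarith)
    have h4 : Real.sin (π * (u - 1)) = -Real.sin (π * u) := by
      rw [show π * (u - 1) = -(π - π * u) by ring, Real.sin_neg, Real.sin_pi_sub]
    rw [h4] at h3
    have h5 : -Real.sin (π * u) ≤ |Real.sin (π * u)| := neg_le_abs _
    have h6 : |u| = u := abs_of_pos hu0
    have h7 : |u - 1| = u - 1 := abs_of_pos (by linarith)
    rw [h6, h7]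
    nlinarith

/-- abs of E t - c for |c| = 1 -/
lemma abs_exp_sub_unit (c : ℂ) (hc : ‖c‖ = 1) (t : ℝ) :
    ‖Complex.exp (2 * (π:ℂ) * t * Complex.I) - c‖
      = 2 * |Real.sin (π * (t - Complex.arg c / (2 * π)))| := by
  set s : ℝ := Complex.arg c / (2 * π) with hs
  have hπ : (π:ℝ) ≠ 0 := Real.pi_ne_zero
  have hreal : 2 * π * s = Complex.arg c := by rw [hs]; field_simp
  have hcs : c = Complex.exp (2 * (π:ℂ) * s * Complex.I) := by
    have h1 := Complex.norm_mul_exp_arg_mul_I c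
    rw [hc] at h1
    simp only [Complex.ofReal_one, one_mul] at h1
    have h2 : 2 * (π:ℂ) * s * Complex.I = (Complex.arg c : ℂ) * Complex.I := by
      rw [show (2 * (π:ℂ) * s : ℂ) = ((2 * π * s : ℝ) : ℂ) by push_cast; ring, hreal]
    rw [h2, h1]
  have hfac : Complex.exp (2 * (π:ℂ) * t * Complex.I) - c
      = Complex.exp (2 * (π:ℂ) * s * Complex.I) *
        (Complex.exp (((2 * π * (t - s) : ℝ) : ℂ) * Complex.I) - 1) := by
    rw [mul_sub, mul_one, ← Complex.exp_add]
    conv_lhs => rw [hcs]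
    congr 2
    push_cast
    ring
  rw [hfac, norm_mul]
  have h2 : ‖Complex.exp (2 * (π:ℂ) * s * Complex.I)‖ = 1 := by
    rw [show (2 * (π:ℂ) * s * Complex.I) = ((2 * π * s : ℝ) : ℂ) * Complex.I by push_cast; ring,
      Complex.norm_exp_ofReal_mul_I]
  rw [h2, one_mul, abs_exp_mul_I_sub_one]
  congr 2
  ring

/-- fiber countability -/
lemma fiber_countable (w : ℂ) :
    Set.Countable {t : ℝ | Complex.exp (2 * (π:ℂ) * t * Complex.I) = w} := by
  set S := {t : ℝ | Complex.exp (2 * (π:ℂ) * t * Complex.I) = w} with hS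
  rcases Set.eq_empty_or_nonempty S with h | ⟨t₀, ht₀⟩
  · rw [h]; exact Set.countable_empty
  · apply Set.Countable.mono ?_ (Set.countable_range fun n : ℤ => t₀ + n)
    intro t ht
    have h1 : Complex.exp (2 * (π:ℂ) * t * Complex.I)
        = Complex.exp (2 * (π:ℂ) * t₀ * Complex.I) := by
      rw [ht, ht₀]
    rw [Complex.exp_eq_exp_iff_exists_int] at h1
    obtain ⟨n, hn⟩ := h1
    refine ⟨n, ?_⟩
    have hne : (2 * (π:ℂ) * Complex.I) ≠ 0 := by
      simp [Real.pi_ne_zero, Complex.I_ne_zero, Complex.ofReal_ne_zero]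
    have h2 : (t:ℂ) = (t₀:ℂ) + n := by
      have h3 : (t:ℂ) * (2 * (π:ℂ) * Complex.I) = ((t₀:ℂ) + n) * (2 * (π:ℂ) * Complex.I) := by
        rw [add_mul]
        calc (t:ℂ) * (2 * (π:ℂ) * Complex.I) = 2 * (π:ℂ) * t * Complex.I := by ring
        _ = 2 * (π:ℂ) * t₀ * Complex.I + n * (2 * π * Complex.I) := hn
        _ = (t₀:ℂ) * (2 * (π:ℂ) * Complex.I) + (n:ℂ) * (2 * (π:ℂ) * Complex.I) := by
              push_cast; ring
      exact mul_right_cancel₀ hne h3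
    have h4 : t = t₀ + (n:ℝ) := by exact_mod_cast h2
    exact h4.symm

/-- sin fiber countability -/
lemma sin_fiber_countable (s : ℝ) :
    Set.Countable {t : ℝ | Real.sin (π * (t - s)) = 0} := by
  apply Set.Countable.mono ?_ (Set.countable_range fun n : ℤ => s + n)
  intro t ht
  simp only [Set.mem_setOf_eq] at ht
  rw [Real.sin_eq_zero_iff] at ht
  obtain ⟨n, hn⟩ := ht
  refine ⟨n, ?_⟩
  have hπ : (π:ℝ) ≠ 0 := Real.pi_ne_zero
  have h5 : (n:ℝ) * π = (t - s) * π := by rw [hn]; ring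
  have h6 : (n:ℝ) = t - s := mul_right_cancel₀ hπ h5
  show s + (n:ℝ) = t
  linarith

/-- countable sets are a.e. avoided -/
lemma ae_not_mem_of_countable {S : Set ℝ} (hS : S.Countable) :
    ∀ᵐ t : ℝ ∂MeasureTheory.volume, t ∉ S :=
  MeasureTheory.measure_eq_zero_iff_ae_notMem.mp (hS.measure_zero _)

/-- J-int: integrability of log |E t - c| -/
lemma intervalIntegrable_log_abs_exp_sub (c : ℂ) :
    IntervalIntegrable (fun t => Real.log (‖Complex.exp (2 * (π:ℂ) * t * Complex.I) - c‖)) volume 0 1 := by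
  have hcontE : Continuous fun t : ℝ => Complex.exp (2 * (π:ℂ) * t * Complex.I) - c := by
    apply Continuous.sub ?_ continuous_const
    apply Complex.continuous_exp.comp
    exact Continuous.mul (Continuous.mul continuous_const Complex.continuous_ofReal) continuous_const
  have habsE : ∀ t : ℝ, ‖Complex.exp (2 * (π:ℂ) * t * Complex.I)‖ = 1 := by
    intro t
    rw [show (2 * (π:ℂ) * t * Complex.I) = ((2 * π * t : ℝ) : ℂ) * Complex.I by push_cast; ring,
      Complex.norm_exp_ofReal_mul_I]
  have hmeas : Measurable fun t : ℝ => Real.log (‖Complex.exp (2 * (π:ℂ) * t * Complex.I) - c‖) :=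
    Real.measurable_log.comp (continuous_norm.comp hcontE).measurable
  by_cases hc : ‖c‖ = 1
  case neg =>
    apply ContinuousOn.intervalIntegrable
    apply ContinuousOn.log (continuous_norm.comp hcontE).continuousOn
    intro t _
    simp only [Function.comp_apply]
    intro h0
    have he : Complex.exp (2 * (π:ℂ) * t * Complex.I) = c :=
      sub_eq_zero.mp (norm_eq_zero.mp h0)
    exact hc (by rw [← he, habsE t])
  case pos =>
    set s : ℝ := Complex.arg c / (2 * π) with hsdef
    have hπ : (0:ℝ) < π := Real.pi_pos
    have hs_lb : -(1/2 : ℝ) < s := by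
      rw [hsdef, lt_div_iff₀ (by positivity)]
      have := Complex.neg_pi_lt_arg c
      linarith
    have hs_ub : s ≤ 1/2 := by
      rw [hsdef, div_le_iff₀ (by positivity)]
      have := Complex.arg_le_pi c
      linarith
    rw [intervalIntegrable_iff_integrableOn_Ioc_of_le zero_le_one]
    have hg : IntervalIntegrable (fun t => Real.log 2 +
        (|Real.log (|t - s|)| + |Real.log (|t - (s+1)|)|)) volume 0 1 :=
      (_root_.intervalIntegrable_const).add
        ((intervalIntegrable_abs_log_abs_sub s).add (intervalIntegrable_abs_log_abs_sub (s+1)))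
    rw [intervalIntegrable_iff_integrableOn_Ioc_of_le zero_le_one] at hg
    apply MeasureTheory.Integrable.mono' hg (hmeas.aestronglyMeasurable)
    rw [MeasureTheory.ae_restrict_iff' measurableSet_Ioc]
    filter_upwards [ae_not_mem_of_countable (sin_fiber_countable s)] with t hts htIoc
    have hts' : Real.sin (π * (t - s)) ≠ 0 := fun h => hts h
    simp only [Set.mem_Ioc] at htIoc
    set u : ℝ := t - s with hu
    have hu_lb : -(1/2 : ℝ) ≤ u := by rw [hu]; linarith [htIoc.1]
    have hu_ub : u ≤ 3/2 := by rw [hu]; linarith [htIoc.2]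
    have hu0 : u ≠ 0 := fun h => hts' (by rw [h, mul_zero, Real.sin_zero])
    have hu1 : u ≠ 1 := fun h => hts' (by rw [h, mul_one, Real.sin_pi])
    have habs := abs_exp_sub_unit c hc t
    rw [← hsdef, ← hu] at habs
    have hsin_pos : 0 < |Real.sin (π * u)| := abs_pos.mpr hts'
    have hlow : 2 * (|u| * |u - 1|) ≤ 2 * |Real.sin (π * u)| := by
      have := sin_lower_bound hu_lb hu_ub
      linarith
    have hup : 2 * |Real.sin (π * u)| ≤ 2 := by
      have h1 : |Real.sin (π * u)| ≤ 1 := abs_le.mpr ⟨Real.neg_one_le_sin _, Real.sin_le_one _⟩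
      linarith
    have habs_u : |u| ≠ 0 := fun h => hu0 (abs_eq_zero.mp h)
    have habs_u1 : |u - 1| ≠ 0 := fun h => hu1 (by have := sub_eq_zero.mp (abs_eq_zero.mp h); linarith)
    have hlogexp : Real.log (2 * (|u| * |u - 1|)) =
        Real.log 2 + (Real.log |u| + Real.log |u - 1|) := by
      rw [Real.log_mul two_ne_zero (by positivity), Real.log_mul habs_u habs_u1]
    rw [Real.norm_eq_abs, habs]
    have hlog2 : (0:ℝ) ≤ Real.log 2 := Real.log_nonneg one_le_two
    have hloglow : Real.log (2 * (|u| * |u - 1|)) ≤ Real.log (2 * |Real.sin (π * u)|) := by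
      apply Real.log_le_log ?_ hlow
      have : 0 < |u| := abs_pos.mpr hu0
      have : 0 < |u - 1| := abs_pos.mpr (sub_ne_zero.mpr hu1)
      positivity
    have hlogup : Real.log (2 * |Real.sin (π * u)|) ≤ Real.log 2 :=
      Real.log_le_log (by linarith) hup
    rw [abs_le]
    constructor
    · rw [hlogexp] at hloglow
      have n1 : -|Real.log (|u|)| ≤ Real.log (|u|) := neg_abs_le _
      have n2 : -|Real.log (|u - 1|)| ≤ Real.log (|u - 1|) := neg_abs_le _
      have : t - (s + 1) = u - 1 := by rw [hu]; ring
      rw [this]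
      linarith
    · have : t - (s + 1) = u - 1 := by rw [hu]; ring
      rw [this]
      have a1 : (0:ℝ) ≤ |Real.log (|u|)| := abs_nonneg _
      have a2 : (0:ℝ) ≤ |Real.log (|u - 1|)| := abs_nonneg _
      linarith
/-- Cauchy mean value: for |b| < 1, ∫₀¹ log|1 - b e^{2πit}| dt = 0 -/
lemma cauchy_log_zero (b : ℂ) (hb : ‖b‖ < 1) :
    ∫ t in (0:ℝ)..1, Real.log (‖1 - b * Complex.exp (2 * (π:ℂ) * t * Complex.I)‖) = 0 := by
  set g : ℂ → ℂ := fun z => Complex.log (1 - b * z) with hg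
  have hre : ∀ z : ℂ, ‖z‖ ≤ 1 → 0 < (1 - b * z).re := by
    intro z hz
    have h1 : (b * z).re ≤ ‖b * z‖ := Complex.re_le_norm _
    have h2 : ‖b * z‖ ≤ ‖b‖ := by
      rw [norm_mul]
      calc ‖b‖ * ‖z‖ ≤ ‖b‖ * 1 :=
        mul_le_mul_of_nonneg_left hz (norm_nonneg b)
      _ = ‖b‖ := mul_one _
    simp only [Complex.sub_re, Complex.one_re, Complex.mul_re]
    have : (b * z).re < 1 := lt_of_le_of_lt (h1.trans h2) hb
    simp only [Complex.mul_re] at this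
    linarith
  have hslit : ∀ z : ℂ, ‖z‖ ≤ 1 → (1 - b * z) ∈ Complex.slitPlane := by
    intro z hz
    exact Complex.mem_slitPlane_iff.mpr (Or.inl (hre z hz))
  have hlin : Continuous fun z : ℂ => 1 - b * z :=
    continuous_const.sub (continuous_const.mul continuous_id)
  have hcont : ContinuousOn g (Metric.closedBall 0 1) := by
    apply ContinuousOn.clog hlin.continuousOn
    intro z hz
    rw [Metric.mem_closedBall, dist_zero_right] at hz
    exact hslit z hz
  have hdiff : ∀ z ∈ Metric.ball (0:ℂ) 1 \ ∅, DifferentiableAt ℂ g z := by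
    intro z hz
    rw [Set.diff_empty, Metric.mem_ball, dist_zero_right] at hz
    apply DifferentiableAt.clog
    · exact (differentiable_const _).sub ((differentiable_id.const_mul b)) |>.differentiableAt
    · exact hslit z hz.le
  have key := Complex.circleIntegral_sub_inv_smul_of_differentiable_on_off_countable
    (R := 1) (c := 0) (w := 0) (f := g) Set.countable_empty
    (Metric.mem_ball_self one_pos) hcont hdiff
  have hg0 : g 0 = 0 := by rw [hg]; simp [Complex.log_one]
  rw [hg0, smul_zero] at key
  -- unfold the circle integral
  rw [circleIntegral] at key
  simp only [deriv_circleMap, sub_zero] at key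
  have hsimp : ∀ θ : ℝ, (circleMap 0 1 θ * Complex.I) • ((circleMap 0 1 θ)⁻¹ • g (circleMap 0 1 θ))
      = Complex.I * g (circleMap 0 1 θ) := by
    intro θ
    have hne : circleMap 0 1 θ ≠ 0 := by
      rw [circleMap_zero]
      simp [Complex.exp_ne_zero]
    simp only [smul_eq_mul]
    field_simp
  rw [intervalIntegral.integral_congr (fun θ _ => hsimp θ)] at key
  rw [intervalIntegral.integral_const_mul] at key
  have hI : (Complex.I : ℂ) ≠ 0 := Complex.I_ne_zero
  have hzero : ∫ θ in (0:ℝ)..2*π, g (circleMap 0 1 θ) = 0 := by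
    rcases mul_eq_zero.mp key with h | h
    · exact absurd h hI
    · exact h
  -- continuity of the composite
  have hcomp : Continuous fun θ : ℝ => g (circleMap 0 1 θ) := by
    apply Continuous.clog (hlin.comp (continuous_circleMap 0 1))
    intro θ
    apply hslit
    simp only [Function.comp_apply, circleMap_zero]
    rw [show ((1:ℝ):ℂ) * Complex.exp (θ * Complex.I) = Complex.exp ((θ:ℝ) * Complex.I) by push_cast; ring]
    rw [Complex.norm_exp_ofReal_mul_I]
  -- take real parts
  have hre2 : ∫ θ in (0:ℝ)..2*π, (g (circleMap 0 1 θ)).re = 0 := by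
    have := Complex.reCLM.intervalIntegral_comp_comm
      (hcomp.intervalIntegrable (μ := volume) (0:ℝ) (2*π))
    simp only [Complex.reCLM_apply] at this
    rw [this, hzero, Complex.zero_re]
  -- identify the real part with the log of the abs
  have hre3 : ∀ θ : ℝ, (g (circleMap 0 1 θ)).re
      = Real.log (‖1 - b * Complex.exp ((θ:ℂ) * Complex.I)‖) := by
    intro θ
    rw [hg]
    simp only [circleMap_zero]
    rw [Complex.log_re]
    norm_num
  rw [intervalIntegral.integral_congr (fun θ _ => hre3 θ)] at hre2
  -- substitute θ = 2πt
  have hsub : (fun t : ℝ => Real.log (‖1 - b * Complex.exp (2 * (π:ℂ) * t * Complex.I)‖))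
      = fun t : ℝ => (fun θ : ℝ => Real.log (‖1 - b * Complex.exp ((θ:ℂ) * Complex.I)‖)) (2 * π * t) := by
    funext t
    congr 3
    push_cast
    ring
  rw [hsub, intervalIntegral.integral_comp_mul_left
    (f := fun θ : ℝ => Real.log (‖1 - b * Complex.exp ((θ:ℂ) * Complex.I)‖))
    (by positivity : (2*π : ℝ) ≠ 0)]
  rw [mul_zero, mul_one, hre2, smul_zero]
noncomputable def rseq (n : ℕ) : ℝ := 1 - ((n:ℝ)+2)⁻¹

lemma rseq_half (n : ℕ) : (1/2:ℝ) ≤ rseq n := by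
  rw [rseq]
  have h1 : ((n:ℝ)+2)⁻¹ ≤ 1/2 := by
    rw [inv_le_comm₀ (by positivity) (by norm_num)]
    push_cast; linarith [Nat.cast_nonneg (α := ℝ) n]
  linarith

lemma rseq_lt_one (n : ℕ) : rseq n < 1 := by
  rw [rseq]
  have : 0 < ((n:ℝ)+2)⁻¹ := by positivity
  linarith

lemma rseq_tendsto : Filter.Tendsto rseq Filter.atTop (nhds 1) := by
  have h1 : Filter.Tendsto (fun n : ℕ => ((n:ℝ)+2)⁻¹) Filter.atTop (nhds 0) :=
    tendsto_inv_atTop_zero.comp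
      (Filter.tendsto_atTop_add_const_right Filter.atTop 2 tendsto_natCast_atTop_atTop)
  have h2 := tendsto_const_nhds (x := (1:ℝ)) (f := Filter.atTop (α := ℕ)) |>.sub h1
  rw [sub_zero] at h2
  exact h2

lemma abs_E (t : ℝ) : ‖Complex.exp (2 * (π:ℂ) * t * Complex.I)‖ = 1 := by
  rw [show (2 * (π:ℂ) * t * Complex.I) = ((2 * π * t : ℝ) : ℂ) * Complex.I by push_cast; ring,
    Complex.norm_exp_ofReal_mul_I]

lemma abs_sub_conj_trick (c : ℂ) (t : ℝ) :
    ‖Complex.exp (2 * (π:ℂ) * t * Complex.I) - c‖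
      = ‖1 - (starRingEnd ℂ) c * Complex.exp (2 * (π:ℂ) * t * Complex.I)‖ := by
  set E := Complex.exp (2 * (π:ℂ) * t * Complex.I) with hE
  have h1 : ‖1 - (starRingEnd ℂ) c * E‖
      = ‖1 - c * (starRingEnd ℂ) E‖ := by
    rw [← Complex.norm_conj (1 - (starRingEnd ℂ) c * E)]
    congr 1
    rw [map_sub, map_one, map_mul, Complex.conj_conj]
  rw [h1]
  have h2 : E * (1 - c * (starRingEnd ℂ) E) = E - c := by
    have h3 : E * (starRingEnd ℂ) E = ((Complex.normSq E : ℝ) : ℂ) := Complex.mul_conj E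
    have h4 : Complex.normSq E = 1 := by
      rw [← Complex.sq_norm, hE, abs_E]; norm_num
    rw [mul_sub, mul_one, show E * (c * (starRingEnd ℂ) E) = c * (E * (starRingEnd ℂ) E) by ring,
      h3, h4]
    simp
  calc ‖E - c‖ = ‖E * (1 - c * (starRingEnd ℂ) E)‖ := by rw [h2]
  _ = ‖E‖ * ‖1 - c * (starRingEnd ℂ) E‖ := norm_mul _ _
  _ = ‖1 - c * (starRingEnd ℂ) E‖ := by rw [hE, abs_E, one_mul]

/-- value 0 for |c| < 1 -/
lemma integral_log_abs_exp_sub_zero (c : ℂ) (hc : ‖c‖ < 1) :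
    ∫ t in (0:ℝ)..1, Real.log (‖Complex.exp (2 * (π:ℂ) * t * Complex.I) - c‖) = 0 := by
  have heq : (fun t : ℝ => Real.log (‖Complex.exp (2 * (π:ℂ) * t * Complex.I) - c‖))
      = fun t : ℝ => Real.log (‖1 - (starRingEnd ℂ) c * Complex.exp (2 * (π:ℂ) * t * Complex.I)‖) := by
    funext t
    rw [abs_sub_conj_trick]
  rw [heq]
  exact cauchy_log_zero _ (by rwa [Complex.norm_conj])

/-- J-val : the integral is always ≥ 0 -/
lemma integral_log_abs_exp_sub_nonneg (c : ℂ) :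
    0 ≤ ∫ t in (0:ℝ)..1, Real.log (‖Complex.exp (2 * (π:ℂ) * t * Complex.I) - c‖) := by
  rcases lt_trichotomy (‖c‖) 1 with h | h | h
  · rw [integral_log_abs_exp_sub_zero c h]
  · -- |c| = 1 : dominated convergence
    set F : ℝ → ℝ := fun t => Real.log (‖Complex.exp (2 * (π:ℂ) * t * Complex.I) - c‖) with hF
    have hr_pos : ∀ n, (1/2 : ℝ) ≤ rseq n := rseq_half
    have hr_lt : ∀ n, rseq n < 1 := rseq_lt_one
    have hr_tendsto : Tendsto rseq atTop (nhds 1) := rseq_tendsto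
    set Fn : ℕ → ℝ → ℝ := fun n t => Real.log (‖Complex.exp (2 * (π:ℂ) * t * Complex.I) - ((rseq n : ℝ) : ℂ) * c‖) with hFn
    have habs_rc : ∀ n, ‖((rseq n : ℝ) : ℂ) * c‖ < 1 := by
      intro n
      have h05 : (1/2:ℝ) ≤ rseq n := hr_pos n
      rw [norm_mul, Complex.norm_real, Real.norm_eq_abs, h, mul_one,
        abs_of_nonneg (le_trans (by norm_num : (0:ℝ) ≤ 1/2) h05)]
      exact hr_lt n
    have hFn_cont : ∀ n, Continuous (Fn n) := by
      intro n
      apply Continuous.log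
      · exact continuous_norm.comp ((Complex.continuous_exp.comp
          ((continuous_const.mul Complex.continuous_ofReal).mul continuous_const)).sub
          continuous_const)
      · intro t
        intro h0
        have he : Complex.exp (2*(π:ℂ)*t*Complex.I) = ((rseq n : ℝ):ℂ) * c :=
          sub_eq_zero.mp (norm_eq_zero.mp h0)
        have h1 := abs_E t
        rw [he] at h1
        exact absurd h1 (habs_rc n).ne
    have hFn_val : ∀ n, ∫ t in (0:ℝ)..1, Fn n t = 0 := fun n =>
      integral_log_abs_exp_sub_zero _ (habs_rc n)
    have hbound_int : IntervalIntegrable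
        (fun t => |F t| + Real.log 2) volume 0 1 :=
      (intervalIntegrable_log_abs_exp_sub c).abs.add _root_.intervalIntegrable_const
    have hdct := intervalIntegral.tendsto_integral_filter_of_dominated_convergence
      (μ := volume) (a := (0:ℝ)) (b := 1) (F := Fn) (f := F) (l := atTop)
      (bound := fun t => |F t| + Real.log 2)
      (Filter.Eventually.of_forall fun n => ((hFn_cont n).measurable).aestronglyMeasurable)
      ?_ hbound_int ?_
    · have h0 : Tendsto (fun n => ∫ t in (0:ℝ)..1, Fn n t) atTop (nhds 0) := by
        simp only [hFn_val]
        exact tendsto_const_nhds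
      have := tendsto_nhds_unique hdct h0
      rw [this]
    · -- bound
      apply Filter.Eventually.of_forall
      intro n
      filter_upwards [ae_not_mem_of_countable (fiber_countable c)] with t htf _
      have hEc : Complex.exp (2*(π:ℂ)*t*Complex.I) ≠ c := fun hh => htf hh
      set E := Complex.exp (2*(π:ℂ)*t*Complex.I) with hEdef
      set m := ‖E - c‖ with hm
      set u := ‖E - ((rseq n : ℝ):ℂ) * c‖ with hu
      have hm_pos : 0 < m := by
        rw [hm]
        exact norm_pos_iff.mpr (sub_ne_zero.mpr hEc)
      have hRle : (E * (starRingEnd ℂ) c).re ≤ 1 := by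
        calc (E * (starRingEnd ℂ) c).re ≤ ‖E * (starRingEnd ℂ) c‖ :=
              Complex.re_le_norm _
        _ = 1 := by rw [norm_mul, Complex.norm_conj, h, hEdef, abs_E, one_mul]
      have hmsq : m ^ 2 = 2 - 2 * (E * (starRingEnd ℂ) c).re := by
        rw [hm, Complex.sq_norm, Complex.normSq_sub]
        have h1 : Complex.normSq E = 1 := by
          rw [← Complex.sq_norm, hEdef, abs_E]; norm_num
        have h2 : Complex.normSq c = 1 := by
          rw [← Complex.sq_norm, h]; norm_num
        rw [h1, h2]; ring
      have husq : u ^ 2 = 1 + (rseq n)^2 - 2 * (rseq n) * (E * (starRingEnd ℂ) c).re := by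
        rw [hu, Complex.sq_norm, Complex.normSq_sub]
        have h1 : Complex.normSq E = 1 := by
          rw [← Complex.sq_norm, hEdef, abs_E]; norm_num
        have h2 : Complex.normSq (((rseq n : ℝ):ℂ) * c) = (rseq n)^2 := by
          rw [Complex.normSq_mul, Complex.normSq_ofReal, ← Complex.sq_norm, h]; ring
        have h3 : (E * (starRingEnd ℂ) (((rseq n : ℝ):ℂ) * c)).re
            = (rseq n) * (E * (starRingEnd ℂ) c).re := by
          rw [map_mul, Complex.conj_ofReal,
            show E * (((rseq n : ℝ):ℂ) * (starRingEnd ℂ) c) = ((rseq n : ℝ):ℂ) * (E * (starRingEnd ℂ) c) by ring,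
            Complex.re_ofReal_mul]
        rw [h1, h2, h3]; ring
      have hr1 : (1/2:ℝ) ≤ rseq n := hr_pos n
      have hr2 : rseq n ≤ 1 := (hr_lt n).le
      have hu_nonneg : 0 ≤ u := norm_nonneg _
      have hkey : m ^ 2 ≤ 2 * u ^ 2 := by
        nlinarith [hmsq, husq, sq_nonneg (rseq n - 1),
          mul_nonneg (by linarith [hRle] : (0:ℝ) ≤ 1 - (E * (starRingEnd ℂ) c).re)
            (by linarith [hr1] : (0:ℝ) ≤ 2 * rseq n - 1)]
      have hu2pos : 0 < u ^ 2 := by nlinarith [pow_pos hm_pos 2]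
      have hu_pos : 0 < u := by
        rcases hu_nonneg.lt_or_eq with h' | h'
        · exact h'
        · exfalso; rw [← h'] at hu2pos; simp at hu2pos
      have hmle : m ≤ 2 * u := by
        nlinarith [hkey, mul_pos hm_pos hu_pos, sq_nonneg (m - 2*u), sq_nonneg (m + 2*u)]
      have hule : u ≤ 2 := by
        rw [hu]
        calc ‖E - ((rseq n : ℝ):ℂ) * c‖ ≤ ‖E‖ + ‖((rseq n : ℝ):ℂ) * c‖ :=
              norm_sub_le _ _
        _ ≤ 1 + 1 := by
              rw [hEdef, abs_E]
              exact add_le_add le_rfl (habs_rc n).le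
        _ = 2 := by norm_num
      have hFnt : Fn n t = Real.log u := by rw [hFn]
      have hFt : |F t| = |Real.log m| := by rw [hF]
      rw [Real.norm_eq_abs, hFnt, hFt]
      have hlog2 : (0:ℝ) ≤ Real.log 2 := Real.log_nonneg one_le_two
      rw [abs_le]
      constructor
      · have h1 : Real.log m ≤ Real.log (2 * u) := Real.log_le_log hm_pos hmle
        rw [Real.log_mul two_ne_zero hu_pos.ne'] at h1
        have h2 : -|Real.log m| ≤ Real.log m := neg_abs_le _
        linarith
      · have h1 : Real.log u ≤ Real.log 2 := Real.log_le_log hu_pos hule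
        have h2 : (0:ℝ) ≤ |Real.log m| := abs_nonneg _
        linarith
    · -- pointwise limit
      filter_upwards [ae_not_mem_of_countable (fiber_countable c)] with t htf _
      have hEc : Complex.exp (2*(π:ℂ)*t*Complex.I) ≠ c := fun hh => htf hh
      have habs_ne : ‖Complex.exp (2*(π:ℂ)*t*Complex.I) - c‖ ≠ 0 :=
        (norm_pos_iff.mpr (sub_ne_zero.mpr hEc)).ne'
      have h1 : Tendsto (fun n => ((rseq n : ℝ):ℂ)) atTop (nhds 1) := by
        have := (Complex.continuous_ofReal.tendsto 1).comp hr_tendsto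
        simpa [Function.comp_def] using this
      have h2 : Tendsto (fun n => Complex.exp (2*(π:ℂ)*t*Complex.I) - ((rseq n : ℝ):ℂ) * c)
          atTop (nhds (Complex.exp (2*(π:ℂ)*t*Complex.I) - c)) := by
        have := tendsto_const_nhds (x := Complex.exp (2*(π:ℂ)*t*Complex.I)) (f := atTop (α := ℕ))
          |>.sub (h1.mul_const c)
        simpa using this
      have h3 : Tendsto (fun n => ‖Complex.exp (2*(π:ℂ)*t*Complex.I) - ((rseq n : ℝ):ℂ) * c‖) atTop
          (nhds (‖Complex.exp (2*(π:ℂ)*t*Complex.I) - c‖)) :=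
        (continuous_norm.tendsto _).comp h2
      exact ((Real.continuousAt_log habs_ne).tendsto).comp h3
  · -- |c| > 1
    have hc0 : c ≠ 0 := fun h0 => by rw [h0] at h; simp at h; linarith
    have hkey : ∀ t : ℝ, Real.log (‖Complex.exp (2 * (π:ℂ) * t * Complex.I) - c‖)
        = Real.log (‖c‖) + Real.log (‖1 - c⁻¹ * Complex.exp (2 * (π:ℂ) * t * Complex.I)‖) := by
      intro t
      have hfac : Complex.exp (2 * (π:ℂ) * t * Complex.I) - c
          = (-c) * (1 - c⁻¹ * Complex.exp (2 * (π:ℂ) * t * Complex.I)) := by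
        field_simp
        ring
      rw [hfac, norm_mul, norm_neg]
      have habs_inv : ‖c⁻¹ * Complex.exp (2 * (π:ℂ) * t * Complex.I)‖ < 1 := by
        rw [norm_mul, norm_inv, abs_E, mul_one]
        rw [inv_lt_one_iff₀]
        right; exact h
      have hne : ‖1 - c⁻¹ * Complex.exp (2 * (π:ℂ) * t * Complex.I)‖ ≠ 0 := by
        intro h0
        have h1 : (1:ℂ) = c⁻¹ * Complex.exp (2 * (π:ℂ) * t * Complex.I) :=
          sub_eq_zero.mp (norm_eq_zero.mp h0)
        rw [← h1] at habs_inv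
        simp at habs_inv
      rw [Real.log_mul (by simpa using hc0) hne]
    have hcont2 : Continuous fun t : ℝ => Real.log (‖1 - c⁻¹ * Complex.exp (2 * (π:ℂ) * t * Complex.I)‖) := by
      apply Continuous.log
      · exact continuous_norm.comp (continuous_const.sub (continuous_const.mul
          (Complex.continuous_exp.comp
          ((continuous_const.mul Complex.continuous_ofReal).mul continuous_const))))
      · intro t
        intro h0
        have habs_inv : ‖c⁻¹ * Complex.exp (2 * (π:ℂ) * t * Complex.I)‖ < 1 := by
          rw [norm_mul, norm_inv, abs_E, mul_one, inv_lt_one_iff₀]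
          right; exact h
        have h1 : (1:ℂ) = c⁻¹ * Complex.exp (2 * (π:ℂ) * t * Complex.I) :=
          sub_eq_zero.mp (norm_eq_zero.mp h0)
        rw [← h1] at habs_inv
        simp at habs_inv
    rw [intervalIntegral.integral_congr (g := fun t => Real.log (‖c‖)
        + Real.log (‖1 - c⁻¹ * Complex.exp (2 * (π:ℂ) * t * Complex.I)‖))
        (fun t _ => hkey t)]
    rw [intervalIntegral.integral_add (intervalIntegrable_const)
      (hcont2.intervalIntegrable _ _)]
    rw [cauchy_log_zero c⁻¹ (by rw [norm_inv, inv_lt_one_iff₀]; right; exact h)]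
    simp only [intervalIntegral.integral_const, smul_eq_mul, add_zero, sub_zero, one_mul]
    exact Real.log_nonneg (by linarith)
lemma multiset_intervalIntegrable (s : Multiset ℂ) (F : ℂ → ℝ → ℝ)
    (h : ∀ w ∈ s, IntervalIntegrable (F w) volume 0 1) :
    IntervalIntegrable (fun t => (s.map (fun w => F w t)).sum) volume 0 1 := by
  induction s using Multiset.induction_on with
  | empty => simpa using (intervalIntegrable_const (c := (0:ℝ)))
  | cons a s ih =>
      simp only [Multiset.map_cons, Multiset.sum_cons]
      exact (h a (Multiset.mem_cons_self a s)).add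
        (ih fun w hw => h w (Multiset.mem_cons_of_mem hw))

lemma multiset_integral_sum (s : Multiset ℂ) (F : ℂ → ℝ → ℝ)
    (h : ∀ w ∈ s, IntervalIntegrable (F w) volume 0 1) :
    ∫ t in (0:ℝ)..1, (s.map (fun w => F w t)).sum
      = (s.map (fun w => ∫ t in (0:ℝ)..1, F w t)).sum := by
  induction s using Multiset.induction_on with
  | empty => simp
  | cons a s ih =>
      simp only [Multiset.map_cons, Multiset.sum_cons]
      rw [intervalIntegral.integral_add (h a (Multiset.mem_cons_self a s))
        (multiset_intervalIntegrable s F fun w hw => h w (Multiset.mem_cons_of_mem hw)),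
        ih fun w hw => h w (Multiset.mem_cons_of_mem hw)]

/-- The archimedean half : log of leading coefficient bounds the Mahler measure from below. -/
lemma log_lead_le_mahler {P : ℤ[X]} (hlead : 0 < P.leadingCoeff) :
    Real.log (P.leadingCoeff : ℝ) ≤ mahlerMeasure P := by
  classical
  set Q := P.map (Int.castRingHom ℂ) with hQdef
  have hP0 : P ≠ 0 := fun h => by simp [h] at hlead
  have hQ0 : Q ≠ 0 := by
    rw [hQdef, Ne, Polynomial.map_eq_zero_iff (Int.cast_injective)]
    exact hP0
  have hsplits : Q.Splits := IsAlgClosed.splits Q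
  have hprod := hsplits.eq_prod_roots
  have hlc : Q.leadingCoeff = ((P.leadingCoeff : ℤ) : ℂ) := by
    rw [hQdef, Polynomial.leadingCoeff_map_of_leadingCoeff_ne_zero]
    · rfl
    · simp only [eq_intCast, Int.cast_ne_zero, ne_eq]
      exact Polynomial.leadingCoeff_ne_zero.mpr hP0
  have habs_lc : ‖Q.leadingCoeff‖ = (P.leadingCoeff : ℝ) := by
    rw [hlc]
    rw [show ((P.leadingCoeff : ℤ) : ℂ) = (((P.leadingCoeff : ℤ) : ℝ) : ℂ) by push_cast; ring,
      Complex.norm_real, Real.norm_eq_abs, abs_of_pos (by exact_mod_cast hlead)]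
  have hlc_ne : ‖Q.leadingCoeff‖ ≠ 0 := by
    rw [habs_lc]
    exact_mod_cast hlead.ne'
  -- the pointwise decomposition away from the (countably many) bad points
  set G : ℝ → ℝ := fun t => Real.log (P.leadingCoeff : ℝ) +
    (Q.roots.map fun w => Real.log (‖Complex.exp (2 * (π:ℂ) * t * Complex.I) - w‖)).sum with hGdef
  have hbadcount : Set.Countable (⋃ w ∈ (Q.roots.toFinset : Set ℂ),
      {t : ℝ | Complex.exp (2 * (π:ℂ) * t * Complex.I) = w}) :=
    Set.Countable.biUnion (Set.Finite.countable (Q.roots.toFinset.finite_toSet))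
      fun w _ => fiber_countable w
  have hae : ∀ᵐ t : ℝ ∂volume, t ∈ Set.uIoc (0:ℝ) 1 →
      Real.log (‖Polynomial.aeval
        (Complex.exp (2 * (π:ℂ) * t * Complex.I)) P‖) = G t := by
    filter_upwards [ae_not_mem_of_countable hbadcount] with t ht _
    have hnotroot : ∀ w ∈ Q.roots, Complex.exp (2 * (π:ℂ) * t * Complex.I) - w ≠ 0 := by
      intro w hw h0
      apply ht
      rw [Set.mem_iUnion₂]
      exact ⟨w, by simpa using Multiset.mem_toFinset.mpr hw, sub_eq_zero.mp h0⟩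
    set z := Complex.exp (2 * (π:ℂ) * t * Complex.I) with hz
    have heval : Polynomial.aeval z P = Q.eval z := by
      rw [hQdef, Polynomial.eval_map, Polynomial.aeval_def]
      rfl
    have hevalprod : Q.eval z = Q.leadingCoeff * ((Q.roots.map fun w => z - w).prod) := by
      conv_lhs => rw [hprod]
      rw [Polynomial.eval_mul, Polynomial.eval_C, Polynomial.eval_multiset_prod]
      simp only [Multiset.map_map, Function.comp]
      simp [Polynomial.eval_sub]
    rw [heval, hevalprod, norm_mul]
    have habs_prod : ‖(Q.roots.map fun w => z - w).prod‖
        = ((Q.roots.map fun w => ‖z - w‖).prod) := by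
      have := map_multiset_prod (normHom : ℂ →*₀ ℝ) (Q.roots.map fun w => z - w)
      simp only [Multiset.map_map, Function.comp] at this ⊢
      exact this
    rw [habs_prod, Real.log_mul hlc_ne ?_, log_multiset_prod]
    · rw [hGdef, habs_lc]
    · intro w hw
      exact fun h0 => hnotroot w hw (norm_eq_zero.mp h0)
    · apply Multiset.prod_ne_zero
      intro h0
      obtain ⟨w, hw, hgw⟩ := Multiset.mem_map.mp h0
      exact hnotroot w hw (norm_eq_zero.mp hgw)
  have hGint' : IntervalIntegrable (fun t => (Q.roots.map fun w => Real.log (‖Complex.exp (2 * (π:ℂ) * t * Complex.I) - w‖)).sum) volume 0 1 :=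
    multiset_intervalIntegrable Q.roots _ fun w _ => intervalIntegrable_log_abs_exp_sub w
  have hmm : mahlerMeasure P = ∫ t in (0:ℝ)..1, G t :=
    intervalIntegral.integral_congr_ae hae
  rw [hmm, hGdef]
  rw [intervalIntegral.integral_add _root_.intervalIntegrable_const hGint']
  simp only [intervalIntegral.integral_const, smul_eq_mul, sub_zero, one_mul]
  have hsum_nonneg : 0 ≤ ∫ t in (0:ℝ)..1, (Q.roots.map fun w => Real.log (‖Complex.exp (2 * (π:ℂ) * t * Complex.I) - w‖)).sum := by
    rw [multiset_integral_sum Q.roots _ fun w _ => intervalIntegrable_log_abs_exp_sub w]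
    apply Multiset.sum_nonneg
    intro y hy
    obtain ⟨w, _, rfl⟩ := Multiset.mem_map.mp hy
    exact integral_log_abs_exp_sub_nonneg w
  linarith

end Arch

/-- **Lemma (Statement 18).** Let `p` be a prime and `x` an algebraic number in an algebraic
closure of `ℚ_p` with `|x|_p ≤ 1`. Then for every algebraic number `α` with `h(α) ≤ 1` none of
whose conjugates equals `x`, the conjugate-average of `log|·-x|_p` is at most `h(α)`. -/
theorem statement18 (p : ℕ) [Fact p.Prime] (v : AlgebraicClosure ℚ_[p] → ℝ)
    (hv : IsPadicAbs p v) (x : AlgebraicClosure ℚ_[p]) (hxalg : IsAlgebraic ℚ x)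
    (hx : v x ≤ 1) (α : AlgebraicClosure ℚ_[p]) (hα : IsAlgebraic ℚ α)
    (hh : logHeight α ≤ 1)
    (hconj : ∀ P : ℤ[X], IsZMinpoly α P → Polynomial.aeval x P ≠ 0) :
    conjAvgV p v x α ≤ logHeight α := by
  classical
  by_cases hex : ∃ P : ℤ[X], IsZMinpoly α P
  · have spec : IsZMinpoly α hex.choose := hex.choose_spec
    obtain ⟨hirr, hlead, hzero⟩ := spec
    have hP0 : hex.choose ≠ 0 := hirr.ne_zero
    have hd : 0 < hex.choose.natDegree := by
      by_contra h0
      push_neg at h0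
      have hdeg : hex.choose.natDegree = 0 := Nat.le_zero.mp h0
      have hC := Polynomial.eq_C_of_natDegree_eq_zero hdeg
      rw [hC, Polynomial.aeval_C] at hzero
      have hc0 : hex.choose.coeff 0 = 0 := by
        have : ((hex.choose.coeff 0 : ℤ) : AlgebraicClosure ℚ_[p]) = 0 := by
          rw [← hzero]; simp
        exact_mod_cast this
      rw [hc0, Polynomial.C_0] at hC
      exact hP0 hC
    have hmain : ((hex.choose.map (Int.castRingHom (AlgebraicClosure ℚ_[p]))).roots.map
        fun z => Real.log (v (z - x))).sum ≤ mahlerMeasure hex.choose := by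
      calc ((hex.choose.map (Int.castRingHom (AlgebraicClosure ℚ_[p]))).roots.map
          fun z => Real.log (v (z - x))).sum
          ≤ Real.log (hex.choose.leadingCoeff : ℝ) :=
            padic_side hv hx hlead (hconj hex.choose ⟨hirr, hlead, hzero⟩)
      _ ≤ mahlerMeasure hex.choose := log_lead_le_mahler hlead
    unfold conjAvgV logHeight
    rw [dif_pos hex, dif_pos hex]
    exact div_le_div_of_nonneg_right hmain (Nat.cast_nonneg _)
  · unfold conjAvgV logHeight
    rw [dif_neg hex, dif_neg hex]
end
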